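/- arXiv:1203.3284 — 4 statements merged into one kernel-verified Lean document; each statement's English description precedes it below -/
import Mathlib

section
/- Let n and k be positive integers, let S = {(i,j) : i ∈ {1,...,n}, j ∈ {0,1,...,k}}, and for each i ∈ {1,...,n} let L_i = {(i,0)} and U_i = {(i,0),(i,1),...,(i,k)}. Then the number of directed binary perfect phylogenies for (S, (L_1,...,L_n), (U_1,...,U_n)) is exactly 2^{kn}. -/
/-! The upper bounds `U i` are pairwise disjoint, so every choice of sets `L i ⊆ T i ⊆ U i` is
pairwise disjoint and hence automatically laminar. The phylogenies are therefore the free choices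
of one set in each interval `[L i, U i]` of the subset lattice, which has `2 ^ (#U i - #L i) = 2 ^ k`
elements. -/

/-- A sequence of subsets (indexed by `ι`) of a finite set is a laminar if for every two
indices `i, j` the intersection `S i ∩ S j` is either `S i`, `S j`, or empty. -/
def IsLaminar {ι α : Type*} [DecidableEq α] (T : ι → Finset α) : Prop :=
  ∀ i j, T i ∩ T j = T i ∨ T i ∩ T j = T j ∨ T i ∩ T j = ∅

/-- A directed binary perfect phylogeny for `(S, L, U)`: a laminar `T` with
`L i ⊆ T i ⊆ U i` for all `i`. -/
def IsDBPP {ι α : Type*} [DecidableEq α] (L U T : ι → Finset α) : Prop :=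
  IsLaminar T ∧ ∀ i, L i ⊆ T i ∧ T i ⊆ U i

open Finset Function

section

variable {ι α : Type*} [DecidableEq α]

theorem isLaminar_of_pairwise_disjoint {T : ι → Finset α} (hT : Pairwise (Disjoint on T)) :
    IsLaminar T := by
  intro i j
  obtain rfl | hij := eq_or_ne i j
  · exact Or.inl (inter_self _)
  · exact Or.inr (Or.inr (disjoint_iff_inter_eq_empty.mp (hT hij)))

theorem isDBPP_iff_of_pairwise_disjoint {L U T : ι → Finset α} (hU : Pairwise (Disjoint on U)) :
    IsDBPP L U T ↔ ∀ i, L i ⊆ T i ∧ T i ⊆ U i :=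
  ⟨And.right, fun hT => ⟨isLaminar_of_pairwise_disjoint
    fun _ _ hij => (hU hij).mono (hT _).2 (hT _).2, hT⟩⟩

theorem card_subtype_forall_subset_subset [Fintype ι] {L U : ι → Finset α}
    (hLU : ∀ i, L i ⊆ U i) :
    Nat.card {T : ι → Finset α // ∀ i, L i ⊆ T i ∧ T i ⊆ U i} =
      ∏ i, 2 ^ (#(U i) - #(L i)) := by
  rw [Nat.card_congr (Equiv.subtypePiEquivPi (p := fun i s => L i ⊆ s ∧ s ⊆ U i)), Nat.card_pi]
  refine Fintype.prod_congr _ _ fun i => ?_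
  simp_rw [← mem_Icc]
  rw [Nat.card_eq_fintype_card, Fintype.card_coe, card_Icc_finset (hLU i)]

end

theorem stmt0_general (n k : ℕ) :
    Nat.card {T : Fin n → Finset (Fin n × Fin (k + 1)) //
      IsDBPP (fun i => {(i, (0 : Fin (k + 1)))})
             (fun i => Finset.univ.image (fun j : Fin (k + 1) => (i, j))) T} =
      2 ^ (k * n) := by
  have hU : Pairwise (Disjoint on fun i : Fin n => univ.image fun j : Fin (k + 1) => (i, j)) :=
    fun i i' hii' => disjoint_left.mpr fun x hx hx' => by
      simp only [mem_image, mem_univ, true_and] at hx hx'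
      obtain ⟨j, rfl⟩ := hx
      obtain ⟨j', hj'⟩ := hx'
      exact hii' (Prod.ext_iff.mp hj').1.symm
  simp_rw [isDBPP_iff_of_pairwise_disjoint hU]
  rw [card_subtype_forall_subset_subset fun i => by simp]
  simp [card_image_of_injective _ (Prod.mk_right_injective _), pow_mul]

/-- With `S = {1,…,n} × {0,…,k}`, `L i = {(i,0)}` and `U i = {(i,0),…,(i,k)}`, the number of
directed binary perfect phylogenies is `2^(k*n)`. -/
theorem stmt0 (n k : ℕ) (hn : 0 < n) (hk : 0 < k) :
    Nat.card {T : Fin n → Finset (Fin n × Fin (k + 1)) //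
      IsDBPP (fun i => {(i, (0 : Fin (k + 1)))})
             (fun i => Finset.univ.image (fun j : Fin (k + 1) => (i, j))) T} =
      2 ^ (k * n) :=
  stmt0_general n k
end

section
/- Let G = (V, E) be a finite simple bipartite graph with bipartition V = A ∪ B. For each edge e = {a,b} ∈ E with a ∈ A and b ∈ B, set L_e = {a} and U_e = {a,b}. If (S_e)_{e ∈ E} is a directed binary perfect phylogeny for (V, (L_e)_{e∈E}, (U_e)_{e∈E}), then the set M = {e ∈ E : S_e = U_e} is a matching of G, i.e., no two distinct edges of M share an endpoint. -/
theorem IsLaminar.inter_eq_empty_of_not_subset {ι α : Type*} [DecidableEq α]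
    {T : ι → Finset α} (hT : IsLaminar T) {i j : ι}
    (hij : ¬T i ⊆ T j) (hji : ¬T j ⊆ T i) : T i ∩ T j = ∅ := by
  rcases hT i j with h | h | h
  · exact absurd (Finset.inter_eq_left.mp h) hij
  · exact absurd (Finset.inter_eq_right.mp h) hji
  · exact h

theorem Finset.eq_and_eq_of_pair_subset_pair {α : Type*} [DecidableEq α] {A B : Finset α}
    (hAB : Disjoint A B) {a a' b b' : α} (ha : a ∈ A) (ha' : a' ∈ A) (hb : b ∈ B)
    (hb' : b' ∈ B) (h : ({a, b} : Finset α) ⊆ {a', b'}) : a = a' ∧ b = b' := by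
  have hne : ∀ {x y}, x ∈ A → y ∈ B → x ≠ y := fun hx hy hxy =>
    Finset.disjoint_left.mp hAB hx (hxy ▸ hy)
  have haa := h (Finset.mem_insert_self a {b})
  have hbb := h (Finset.mem_insert_of_mem (Finset.mem_singleton_self b))
  simp only [Finset.mem_insert, Finset.mem_singleton] at haa hbb
  exact ⟨haa.resolve_right (hne ha hb'), hbb.resolve_left (hne ha' hb).symm⟩

theorem stmt2_general {V : Type*} [DecidableEq V]
    {E : Type*}
    (A B : Finset V) (hAB : Disjoint A B)
    (fa fb : E → V) (ha : ∀ e, fa e ∈ A) (hb : ∀ e, fb e ∈ B)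
    (hsimple : ∀ e e' : E, fa e = fa e' → fb e = fb e' → e = e')
    (T : E → Finset V)
    (hT : IsDBPP (fun e => {fa e}) (fun e => {fa e, fb e}) T) :
    ∀ e e' : E, e ≠ e' → T e = {fa e, fb e} → T e' = {fa e', fb e'} →
      ({fa e, fb e} ∩ {fa e', fb e'} : Finset V) = ∅ := by
  have eq_of_subset : ∀ {e e'}, ({fa e, fb e} : Finset V) ⊆ {fa e', fb e'} → e = e' :=
    fun h ↦
      let ⟨hfa, hfb⟩ := Finset.eq_and_eq_of_pair_subset_pair hAB (ha _) (ha _) (hb _) (hb _) h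
      hsimple _ _ hfa hfb
  intro e e' hne hTe hTe'
  have hdisj := hT.1.inter_eq_empty_of_not_subset (i := e) (j := e')
  rw [hTe, hTe'] at hdisj
  exact hdisj (fun h ↦ hne (eq_of_subset h)) (fun h ↦ hne (eq_of_subset h).symm)

/-- Bipartite graph instance: vertices `V`, bipartition `A, B`, edge set indexed by a finite
type `E`, with each edge `e` having endpoints `fa e ∈ A` and `fb e ∈ B`; the graph is simple,
i.e., distinct edge indices give distinct endpoint pairs.  With `L e = {fa e}` and
`U e = {fa e, fb e}`, if `T` is a directed binary perfect phylogeny then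
`M = {e : T e = U e}` is a matching: no two distinct edges of `M` share an endpoint. -/
theorem stmt2 {V : Type*} [Fintype V] [DecidableEq V]
    {E : Type*} [Fintype E] [DecidableEq E]
    (A B : Finset V) (hAB : Disjoint A B) (hcover : A ∪ B = Finset.univ)
    (fa fb : E → V) (ha : ∀ e, fa e ∈ A) (hb : ∀ e, fb e ∈ B)
    (hsimple : ∀ e e' : E, fa e = fa e' → fb e = fb e' → e = e')
    (T : E → Finset V)
    (hT : IsDBPP (fun e => {fa e}) (fun e => {fa e, fb e}) T) :
    ∀ e e' : E, e ≠ e' → T e = {fa e, fb e} → T e' = {fa e', fb e'} →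
      ({fa e, fb e} ∩ {fa e', fb e'} : Finset V) = ∅ :=
  stmt2_general A B hAB fa fb ha hb hsimple T hT
end

section
/- Let G = (V, E) be a finite simple bipartite graph with bipartition V = A ∪ B. For each edge e = {a,b} ∈ E with a ∈ A and b ∈ B, set L_e = {a} and U_e = {a,b}. If M ⊆ E is a matching of G, then the sequence (S_e)_{e∈E} defined by S_e = U_e if e ∈ M and S_e = L_e otherwise is a directed binary perfect phylogeny for (V, (L_e)_{e∈E}, (U_e)_{e∈E}). -/
section

variable {α : Type*} [DecidableEq α]

theorem Finset.inter_singleton_eq_singleton_or_empty (s : Finset α) (x : α) :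
    s ∩ {x} = {x} ∨ s ∩ {x} = ∅ := by
  by_cases hx : x ∈ s
  · exact .inl (Finset.inter_singleton_of_mem hx)
  · exact .inr (Finset.inter_singleton_of_notMem hx)

theorem Finset.singleton_inter_eq_singleton_or_empty (x : α) (s : Finset α) :
    {x} ∩ s = {x} ∨ {x} ∩ s = ∅ := by
  rw [Finset.inter_comm]
  exact s.inter_singleton_eq_singleton_or_empty x

theorem isLaminar_ite_singleton {ι : Type*} [DecidableEq ι] (M : Finset ι) (U : ι → Finset α)
    (x : ι → α) (hM : (M : Set ι).PairwiseDisjoint U) :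
    IsLaminar fun i => if i ∈ M then U i else {x i} := by
  intro i j
  by_cases hi : i ∈ M <;> by_cases hj : j ∈ M <;> simp only [hi, hj, if_true, if_false]
  · obtain rfl | hij := eq_or_ne i j
    · exact .inl (Finset.inter_self _)
    · exact .inr (.inr (Finset.disjoint_iff_inter_eq_empty.mp (hM hi hj hij)))
  · exact .inr ((U i).inter_singleton_eq_singleton_or_empty (x j))
  · exact (Finset.singleton_inter_eq_singleton_or_empty (x i) (U j)).imp_right .inr
  · exact .inr (({x i} : Finset α).inter_singleton_eq_singleton_or_empty (x j))

end

theorem stmt3_general {V : Type*} [DecidableEq V]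
    {E : Type*} [DecidableEq E]
    (fa fb : E → V)
    (M : Finset E)
    (hM : ∀ e ∈ M, ∀ e' ∈ M, e ≠ e' →
      ({fa e, fb e} ∩ {fa e', fb e'} : Finset V) = ∅) :
    IsDBPP (fun e => {fa e}) (fun e => {fa e, fb e})
      (fun e => if e ∈ M then {fa e, fb e} else {fa e}) := by
  have hdisj : (M : Set E).PairwiseDisjoint fun e => ({fa e, fb e} : Finset V) :=
    fun e he e' he' hne => Finset.disjoint_iff_inter_eq_empty.mpr (hM e he e' he' hne)
  have hsub (e : E) : ({fa e} : Finset V) ⊆ {fa e, fb e} :=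
    Finset.singleton_subset_iff.mpr (Finset.mem_insert_self _ _)
  refine ⟨isLaminar_ite_singleton M _ fa hdisj, fun e => ?_⟩
  dsimp only
  split_ifs
  · exact ⟨hsub e, subset_rfl⟩
  · exact ⟨subset_rfl, hsub e⟩

/-- Bipartite graph instance: vertices `V`, bipartition `A, B`, edge set indexed by a finite
type `E`, with each edge `e` having endpoints `fa e ∈ A` and `fb e ∈ B`; the graph is simple,
i.e., distinct edge indices give distinct endpoint pairs.  With `L e = {fa e}` and
`U e = {fa e, fb e}`, if `M` is a matching of the graph (no two distinct edges of `M`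
share an endpoint), then the sequence `T` with `T e = U e` for `e ∈ M` and `T e = L e`
otherwise is a directed binary perfect phylogeny. -/
theorem stmt3 {V : Type*} [Fintype V] [DecidableEq V]
    {E : Type*} [Fintype E] [DecidableEq E]
    (A B : Finset V) (hAB : Disjoint A B) (hcover : A ∪ B = Finset.univ)
    (fa fb : E → V) (ha : ∀ e, fa e ∈ A) (hb : ∀ e, fb e ∈ B)
    (hsimple : ∀ e e' : E, fa e = fa e' → fb e = fb e' → e = e')
    (M : Finset E)
    (hM : ∀ e ∈ M, ∀ e' ∈ M, e ≠ e' →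
      ({fa e, fb e} ∩ {fa e', fb e'} : Finset V) = ∅) :
    IsDBPP (fun e => {fa e}) (fun e => {fa e, fb e})
      (fun e => if e ∈ M then {fa e, fb e} else {fa e}) :=
  stmt3_general fa fb M hM
end

section
/- Let G = (V, E) be a finite simple bipartite graph with bipartition V = A ∪ B. For each edge e = {a,b} ∈ E with a ∈ A and b ∈ B, set L_e = {a} and U_e = {a,b}. Then the map sending a matching M ⊆ E of G to the sequence (S_e)_{e∈E} with S_e = U_e if e ∈ M and S_e = L_e otherwise is a bijection between the set of matchings of G and the set of directed binary perfect phylogenies for (V, (L_e)_{e∈E}, (U_e)_{e∈E}); in particular, the number of matchings of G equals the number of directed binary perfect phylogenies for this instance. -/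
/-- A matching of the bipartite graph with edges `e` having endpoints `fa e` and `fb e`:
a set of edges no two of which share an endpoint. -/
def IsMatching {V : Type*} [DecidableEq V] {E : Type*} (fa fb : E → V) (M : Finset E) : Prop :=
  ∀ e ∈ M, ∀ e' ∈ M, e ≠ e' → ({fa e, fb e} ∩ {fa e', fb e'} : Finset V) = ∅

/-!
A phylogeny `T` with `{a e} ⊆ T e ⊆ {a e, b e}` is determined by the set `M` of edges `e` with
`b e ∈ T e`, since `a e ≠ b e`. Laminarity of `T` says exactly that `M` is a matching: two distinct
edges of a simple bipartite graph span nested pairs `{a e, b e}` only if they coincide, and a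
singleton `{a e}` is nested in or disjoint from every set.
-/

theorem isLaminar_iff {ι α : Type*} [DecidableEq α] (T : ι → Finset α) :
    IsLaminar T ↔ ∀ i j, T i ⊆ T j ∨ T j ⊆ T i ∨ Disjoint (T i) (T j) := by
  simp only [IsLaminar, Finset.inter_eq_left, Finset.inter_eq_right,
    Finset.disjoint_iff_inter_eq_empty]

theorem eq_pair_or_singleton {V : Type*} [DecidableEq V] {a b : V} {s : Finset V}
    (ha : a ∈ s) (hs : s ⊆ {a, b}) : s = if b ∈ s then {a, b} else {a} := by
  ext x
  have hx := @hs x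
  simp only [Finset.mem_insert, Finset.mem_singleton] at hx
  grind

theorem eq_of_pair_subset_pair {V E : Type*} [DecidableEq V] {fa fb : E → V}
    (hne : ∀ e e', fa e ≠ fb e')
    (hsimple : ∀ e e' : E, fa e = fa e' → fb e = fb e' → e = e') {e e' : E}
    (h : ({fa e, fb e} : Finset V) ⊆ {fa e', fb e'}) : e = e' := by
  rw [Finset.insert_subset_iff, Finset.singleton_subset_iff] at h
  simp only [Finset.mem_insert, Finset.mem_singleton] at h
  obtain ⟨hfa | hfa, hfb | hfb⟩ := h
  · exact absurd hfb.symm (hne e' e)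
  · exact hsimple e e' hfa hfb
  · exact absurd hfa (hne e e')
  · exact absurd hfa (hne e e')

section Bipartite

variable {V E : Type*} [DecidableEq V] [DecidableEq E] (fa fb : E → V)

def phylogenyOfMatching (M : Finset E) : E → Finset V :=
  fun e => if e ∈ M then {fa e, fb e} else {fa e}

def matchingOfPhylogeny [Fintype E] (T : E → Finset V) : Finset E :=
  Finset.univ.filter fun e => fb e ∈ T e

variable {fa fb}

theorem isDBPP_phylogenyOfMatching {M : Finset E} (hM : IsMatching fa fb M) :
    IsDBPP (fun e => {fa e}) (fun e => {fa e, fb e}) (phylogenyOfMatching fa fb M) := by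
  have singleton_nested_or_disjoint (a : V) (s : Finset V) :
      {a} ⊆ s ∨ s ⊆ {a} ∨ Disjoint {a} s := by
    by_cases ha : a ∈ s
    · exact .inl (Finset.singleton_subset_iff.mpr ha)
    · exact .inr (.inr (Finset.disjoint_singleton_left.mpr ha))
  refine ⟨(isLaminar_iff _).mpr fun i j => ?_, fun i => ?_⟩
  · unfold phylogenyOfMatching
    by_cases hi : i ∈ M <;> by_cases hj : j ∈ M <;> simp only [hi, hj, if_true, if_false]
    · by_cases hij : i = j
      · exact .inl (hij ▸ subset_rfl)
      · exact .inr (.inr (Finset.disjoint_iff_inter_eq_empty.mpr (hM i hi j hj hij)))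
    · rcases singleton_nested_or_disjoint (fa j) {fa i, fb i} with h | h | h
      exacts [.inr (.inl h), .inl h, .inr (.inr h.symm)]
    · exact singleton_nested_or_disjoint (fa i) {fa j, fb j}
    · exact singleton_nested_or_disjoint (fa i) {fa j}
  · unfold phylogenyOfMatching
    split_ifs <;> simp

theorem fb_mem_phylogenyOfMatching_iff {M : Finset E} {e : E} (hne : fa e ≠ fb e) :
    fb e ∈ phylogenyOfMatching fa fb M e ↔ e ∈ M := by
  unfold phylogenyOfMatching
  split_ifs with he <;> simp [he, hne.symm]

theorem matchingOfPhylogeny_phylogenyOfMatching [Fintype E] (hne : ∀ e, fa e ≠ fb e)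
    (M : Finset E) : matchingOfPhylogeny fb (phylogenyOfMatching fa fb M) = M := by
  ext e
  simp [matchingOfPhylogeny, fb_mem_phylogenyOfMatching_iff (hne e)]

theorem phylogenyOfMatching_matchingOfPhylogeny [Fintype E] {T : E → Finset V}
    (hT : IsDBPP (fun e => {fa e}) (fun e => {fa e, fb e}) T) :
    phylogenyOfMatching fa fb (matchingOfPhylogeny fb T) = T := by
  funext e
  simpa [phylogenyOfMatching, matchingOfPhylogeny] using
    (eq_pair_or_singleton (Finset.singleton_subset_iff.mp (hT.2 e).1) (hT.2 e).2).symm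

theorem isMatching_matchingOfPhylogeny [Fintype E] (hne : ∀ e e', fa e ≠ fb e')
    (hsimple : ∀ e e' : E, fa e = fa e' → fb e = fb e' → e = e') {T : E → Finset V}
    (hT : IsDBPP (fun e => {fa e}) (fun e => {fa e, fb e}) T) :
    IsMatching fa fb (matchingOfPhylogeny fb T) := by
  intro e he e' he' hee'
  have hpair : ∀ d ∈ matchingOfPhylogeny fb T, T d = {fa d, fb d} := fun d hd => by
    rw [← phylogenyOfMatching_matchingOfPhylogeny hT, phylogenyOfMatching, if_pos hd]
  rw [← hpair e he, ← hpair e' he', ← Finset.disjoint_iff_inter_eq_empty]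
  rcases (isLaminar_iff T).mp hT.1 e e' with h | h | h
  · rw [hpair e he, hpair e' he'] at h
    exact absurd (eq_of_pair_subset_pair hne hsimple h) hee'
  · rw [hpair e he, hpair e' he'] at h
    exact absurd (eq_of_pair_subset_pair hne hsimple h).symm hee'
  · exact h

def matchingEquivPhylogeny [Fintype E] (hne : ∀ e e', fa e ≠ fb e')
    (hsimple : ∀ e e' : E, fa e = fa e' → fb e = fb e' → e = e') :
    {M : Finset E // IsMatching fa fb M} ≃
      {T : E → Finset V // IsDBPP (fun e => {fa e}) (fun e => {fa e, fb e}) T} where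
  toFun M := ⟨phylogenyOfMatching fa fb M, isDBPP_phylogenyOfMatching M.2⟩
  invFun T := ⟨matchingOfPhylogeny fb T, isMatching_matchingOfPhylogeny hne hsimple T.2⟩
  left_inv M := Subtype.ext (matchingOfPhylogeny_phylogenyOfMatching (fun e => hne e e) M)
  right_inv T := Subtype.ext (phylogenyOfMatching_matchingOfPhylogeny T.2)

end Bipartite

theorem stmt4_general {V : Type*} [DecidableEq V]
    {E : Type*} [Fintype E] [DecidableEq E]
    (A B : Finset V) (hAB : Disjoint A B)
    (fa fb : E → V) (ha : ∀ e, fa e ∈ A) (hb : ∀ e, fb e ∈ B)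
    (hsimple : ∀ e e' : E, fa e = fa e' → fb e = fb e' → e = e') :
    (∃ Φ : {M : Finset E // IsMatching fa fb M} →
        {T : E → Finset V // IsDBPP (fun e => {fa e}) (fun e => {fa e, fb e}) T},
      Function.Bijective Φ ∧
      ∀ M : {M : Finset E // IsMatching fa fb M},
        (Φ M : E → Finset V) =
          fun e => if e ∈ (M : Finset E) then {fa e, fb e} else {fa e}) ∧
    Nat.card {M : Finset E // IsMatching fa fb M} =
      Nat.card {T : E → Finset V //
        IsDBPP (fun e => {fa e}) (fun e => {fa e, fb e}) T} := by
  have hne : ∀ e e', fa e ≠ fb e' := fun e e' h =>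
    Finset.disjoint_left.mp hAB (ha e) (h ▸ hb e')
  let Φ := matchingEquivPhylogeny hne hsimple
  exact ⟨⟨Φ, Φ.bijective, fun _ => rfl⟩, Nat.card_congr Φ⟩

/-- Bipartite graph instance: vertices `V`, bipartition `A, B`, edge set indexed by a finite
type `E`, with each edge `e` having endpoints `fa e ∈ A` and `fb e ∈ B`; the graph is simple,
i.e., distinct edge indices give distinct endpoint pairs.  With `L e = {fa e}` and
`U e = {fa e, fb e}`, the map sending a matching `M` to the sequence `T` with `T e = U e`
for `e ∈ M` and `T e = L e` otherwise is a bijection from matchings to directed binary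
perfect phylogenies; in particular the numbers of the two kinds of objects coincide. -/
theorem stmt4 {V : Type*} [Fintype V] [DecidableEq V]
    {E : Type*} [Fintype E] [DecidableEq E]
    (A B : Finset V) (hAB : Disjoint A B) (hcover : A ∪ B = Finset.univ)
    (fa fb : E → V) (ha : ∀ e, fa e ∈ A) (hb : ∀ e, fb e ∈ B)
    (hsimple : ∀ e e' : E, fa e = fa e' → fb e = fb e' → e = e') :
    (∃ Φ : {M : Finset E // IsMatching fa fb M} →
        {T : E → Finset V // IsDBPP (fun e => {fa e}) (fun e => {fa e, fb e}) T},
      Function.Bijective Φ ∧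
      ∀ M : {M : Finset E // IsMatching fa fb M},
        (Φ M : E → Finset V) =
          fun e => if e ∈ (M : Finset E) then {fa e, fb e} else {fa e}) ∧
    Nat.card {M : Finset E // IsMatching fa fb M} =
      Nat.card {T : E → Finset V //
        IsDBPP (fun e => {fa e}) (fun e => {fa e, fb e}) T} :=
  stmt4_general A B hAB fa fb ha hb hsimple
end
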